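/- Let m ≥ 1 be an integer and γ_{-m}, …, γ_m real numbers satisfying the critical equations. Then the coefficients are antisymmetric: γ_{-i} = −γ_i for every i with 0 ≤ i ≤ m; in particular γ_0 = 0. -/

import Mathlib

open Real Finset

/-- The first-order optimality (critical) equations for the DRP dispersion error. -/
def DRPCritical (m : ℕ) (γ : ℤ → ℝ) : Prop :=
  ∀ i ∈ Finset.Icc (-(m : ℤ)) (m : ℤ),
    (∫ ζ in (0 : ℝ)..(π / 2),
      (-ζ * Real.sin ((i : ℝ) * ζ) +
        ∑ k ∈ Finset.Icc (-(m : ℤ)) (m : ℤ), γ k * Real.cos (((k : ℝ) - (i : ℝ)) * ζ))) = 0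


/-! Adding the critical equations for `i` and `-i` cancels the sine terms and shows that the
cosine polynomial `f ζ = ∑ γ_k cos (k ζ)` is orthogonal on `[0, π/2]` to every `cos (i ζ)`,
hence to itself, so `f` vanishes on `(0, π/2]`. As `f ζ = p (cos ζ)` for the polynomial
`p = ∑ γ_k T_k` (Chebyshev), `p` has infinitely many roots and `f ≡ 0`; orthogonality of the
cosines on `[0, 2π]` then reads off `γ_i + γ_{-i} = 0`. -/

open Polynomial Polynomial.Chebyshev

section CosSum

variable (s : Finset ℤ) (γ : ℤ → ℝ)

noncomputable def cosSum (x : ℝ) : ℝ := ∑ k ∈ s, γ k * cos (k * x)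

@[fun_prop]
lemma continuous_cosSum : Continuous (cosSum s γ) := by
  unfold cosSum; fun_prop

lemma cosSum_eq_eval_chebyshevT (x : ℝ) :
    cosSum s γ x = (∑ k ∈ s, γ k • T ℝ k).eval (cos x) := by
  simp [cosSum, eval_finsetSum, T_real_cos]

lemma cosSum_eq_zero_of_infinite_zeros {t : Set ℝ} (ht : t ⊆ Set.Icc 0 π) (hinf : t.Infinite)
    (h : ∀ x ∈ t, cosSum s γ x = 0) : cosSum s γ = 0 := by
  have hp : ∑ k ∈ s, γ k • T ℝ k = 0 := by
    refine eq_zero_of_infinite_isRoot _ ((hinf.image (injOn_cos.mono ht)).mono ?_)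
    rintro _ ⟨x, hx, rfl⟩
    simpa [← cosSum_eq_eval_chebyshevT] using h x hx
  funext x
  rw [cosSum_eq_eval_chebyshevT, hp, eval_zero, Pi.zero_apply]

end CosSum

lemma integral_cos_int_mul (n : ℤ) :
    ∫ x in (0 : ℝ)..2 * π, cos (n * x) = if n = 0 then 2 * π else 0 := by
  split_ifs with hn
  · simp [hn]
  · have hn' : (n : ℝ) ≠ 0 := Int.cast_ne_zero.mpr hn
    have hsin : sin (n * (2 * π)) = 0 := by
      simpa [mul_assoc, mul_left_comm] using sin_int_mul_pi (2 * n)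
    simp [intervalIntegral.integral_comp_mul_left (fun x => cos x) hn', hsin]

lemma integral_cos_int_mul_mul_cos_int_mul (a b : ℤ) :
    ∫ x in (0 : ℝ)..2 * π, cos (a * x) * cos (b * x) =
      π * ((if a = b then 1 else 0) + (if a = -b then 1 else 0)) := by
  have h : ∀ x : ℝ, cos (a * x) * cos (b * x) =
      (cos (((a - b : ℤ) : ℝ) * x) + cos (((a + b : ℤ) : ℝ) * x)) / 2 := fun x => by
    push_cast
    rw [sub_mul, add_mul, ← two_mul_cos_mul_cos]
    ring
  simp only [h, intervalIntegral.integral_div]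
  rw [intervalIntegral.integral_add (by apply Continuous.intervalIntegrable; fun_prop)
    (by apply Continuous.intervalIntegrable; fun_prop), integral_cos_int_mul, integral_cos_int_mul]
  simp only [sub_eq_zero, add_eq_zero_iff_eq_neg]
  split_ifs <;> ring

lemma integral_cosSum_mul_cos {s : Finset ℤ} (γ : ℤ → ℝ) {i : ℤ} (hi : i ∈ s) (hi' : -i ∈ s) :
    ∫ x in (0 : ℝ)..2 * π, cosSum s γ x * cos (i * x) = π * (γ i + γ (-i)) := by
  simp only [cosSum, Finset.sum_mul, mul_assoc]
  rw [intervalIntegral.integral_finsetSum fun k _ => by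
    apply Continuous.intervalIntegrable; fun_prop]
  simp only [intervalIntegral.integral_const_mul, integral_cos_int_mul_mul_cos_int_mul,
    mul_add, mul_ite, mul_one, mul_zero, Finset.sum_add_distrib, Finset.sum_ite_eq', hi, hi', if_true]
  ring

lemma add_apply_neg_eq_zero_of_cosSum_eq_zero {s : Finset ℤ} {γ : ℤ → ℝ}
    (h : cosSum s γ = 0) {i : ℤ} (hi : i ∈ s) (hi' : -i ∈ s) : γ i + γ (-i) = 0 := by
  have := integral_cosSum_mul_cos γ hi hi'
  simp only [h, Pi.zero_apply, zero_mul, intervalIntegral.integral_zero] at this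
  exact (mul_eq_zero.mp this.symm).resolve_left pi_ne_zero

lemma integral_cosSum_sq_eq_zero {s : Finset ℤ} {γ : ℤ → ℝ} {a b : ℝ}
    (h : ∀ i ∈ s, ∫ x in a..b, cosSum s γ x * cos (i * x) = 0) :
    ∫ x in a..b, cosSum s γ x ^ 2 = 0 := by
  have hsq : ∀ x, cosSum s γ x ^ 2 = ∑ i ∈ s, γ i * (cosSum s γ x * cos (i * x)) := fun x => by
    conv_lhs => rw [sq]; enter [2]; rw [cosSum]
    rw [Finset.mul_sum]
    exact Finset.sum_congr rfl fun i _ => by ring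
  simp only [hsq]
  rw [intervalIntegral.integral_finsetSum fun i _ => by
    apply Continuous.intervalIntegrable; fun_prop]
  exact Finset.sum_eq_zero fun i hi => by rw [intervalIntegral.integral_const_mul, h i hi, mul_zero]

lemma eqOn_zero_of_integral_sq_eq_zero {f : ℝ → ℝ} (hf : Continuous f) {a b : ℝ} (hab : a ≤ b)
    (h : ∫ x in a..b, f x ^ 2 = 0) : Set.EqOn f 0 (Set.Ioc a b) := by
  have hae : (fun x => f x ^ 2) =ᵐ[MeasureTheory.volume.restrict (Set.Ioc a b)] 0 :=
    (intervalIntegral.integral_eq_zero_iff_of_le_of_nonneg_ae hab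
      (Filter.Eventually.of_forall fun x => sq_nonneg (f x))
      ((hf.pow 2).intervalIntegrable a b)).1 h
  intro x hx
  simpa using MeasureTheory.Measure.eqOn_Ioc_of_ae_eq _ hae (hf.pow 2).continuousOn
    continuousOn_const hx

lemma DRPCritical.integral_cosSum_mul_cos_eq_zero {m : ℕ} {γ : ℤ → ℝ} (hγ : DRPCritical m γ)
    {i : ℤ} (hi : i ∈ Icc (-(m : ℤ)) m) :
    ∫ x in (0 : ℝ)..π / 2, cosSum (Icc (-(m : ℤ)) m) γ x * cos (i * x) = 0 := by
  have hi' : -i ∈ Icc (-(m : ℤ)) m := by simp only [Finset.mem_Icc] at hi ⊢; omega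
  set F : ℤ → ℝ → ℝ := fun j x =>
    -x * sin (j * x) + ∑ k ∈ Icc (-(m : ℤ)) m, γ k * cos ((k - j) * x) with hF
  -- The sine terms of the equations for `i` and `-i` cancel, the cosine terms combine.
  have hsum : ∀ x, F i x + F (-i) x = 2 * (cosSum (Icc (-(m : ℤ)) m) γ x * cos (i * x)) :=
    fun x => by
    simp only [hF, cosSum, Finset.sum_mul, Finset.mul_sum, Int.cast_neg, neg_mul, sin_neg,
      sub_neg_eq_add]
    rw [add_add_add_comm, ← Finset.sum_add_distrib, mul_neg, neg_neg, neg_add_cancel, zero_add]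
    refine Finset.sum_congr rfl fun k _ => ?_
    rw [sub_mul, add_mul, ← mul_add, mul_assoc, ← two_mul_cos_mul_cos]
    ring
  have hF_int : ∀ j, IntervalIntegrable (F j) MeasureTheory.volume 0 (π / 2) := fun j => by
    apply Continuous.intervalIntegrable; fun_prop
  have hadd := intervalIntegral.integral_add (hF_int i) (hF_int (-i))
  rw [hγ i hi, hγ (-i) hi', add_zero] at hadd
  simp only [hsum, intervalIntegral.integral_const_mul] at hadd
  linarith

theorem stmt_7_general (m : ℕ) (γ : ℤ → ℝ) (hγ : DRPCritical m γ) :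
    (∀ i : ℤ, 0 ≤ i → i ≤ (m : ℤ) → γ (-i) = -γ i) ∧ γ 0 = 0 := by
  have hπ : (0 : ℝ) < π / 2 := by positivity
  have hzero_on : Set.EqOn (cosSum (Icc (-(m : ℤ)) m) γ) 0 (Set.Ioc 0 (π / 2)) :=
    eqOn_zero_of_integral_sq_eq_zero (continuous_cosSum _ _) hπ.le
      (integral_cosSum_sq_eq_zero fun i hi => hγ.integral_cosSum_mul_cos_eq_zero hi)
  have hvanish : cosSum (Icc (-(m : ℤ)) m) γ = 0 :=
    cosSum_eq_zero_of_infinite_zeros _ _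
      (Set.Ioc_subset_Icc_self.trans (Set.Icc_subset_Icc_right (by linarith)))
      (Set.Ioc_infinite hπ) hzero_on
  have hanti : ∀ i : ℤ, 0 ≤ i → i ≤ (m : ℤ) → γ (-i) = -γ i := fun i hi0 him => by
    have := add_apply_neg_eq_zero_of_cosSum_eq_zero hvanish (i := i)
      (by simp only [Finset.mem_Icc]; omega) (by simp only [Finset.mem_Icc]; omega)
    linarith
  refine ⟨hanti, ?_⟩
  have h0 := hanti 0 le_rfl (Int.natCast_nonneg m)
  rw [neg_zero] at h0
  linarith

theorem stmt_7 (m : ℕ) (hm : 1 ≤ m) (γ : ℤ → ℝ) (hγ : DRPCritical m γ) :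
    (∀ i : ℤ, 0 ≤ i → i ≤ (m : ℤ) → γ (-i) = -γ i) ∧ γ 0 = 0 :=
  stmt_7_general m γ hγ
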